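/- arXiv:0903.4056 — 5 statements merged into one kernel-verified Lean document; each statement's English description precedes it below -/
import Mathlib

section
/- In the two-animal system above, if the initial distance satisfies ‖x₁(0) − x₂(0)‖ < ξ, then the distance ‖x₁(t) − x₂(t)‖ is strictly increasing in t; if ‖x₁(0) − x₂(0)‖ > ξ it is strictly decreasing; and if ‖x₁(0) − x₂(0)‖ = ξ it is constant. -/
/-!
The relative position `d = x₁ - x₂` obeys `d' = 2 (ξ² / ‖d‖² - 1) d`, so the squared distance
`u = ‖d‖²` solves the linear relaxation equation `u' = 4 (ξ² - u)`. Hence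
`u t = ξ² + (u 0 - ξ²) e^{-4t}`, which increases, decreases or stays put according to the sign
of `u 0 - ξ²`.
-/

open Real Set

theorem HasDerivAt.norm_sq_of_smul {E : Type*} [NormedAddCommGroup E] [InnerProductSpace ℝ E]
    {d : ℝ → E} {c t : ℝ} (h : HasDerivAt d (c • d t) t) :
    HasDerivAt (fun s => ‖d s‖ ^ 2) (2 * c * ‖d t‖ ^ 2) t := by
  convert h.norm_sq using 1
  rw [real_inner_smul_right, real_inner_self_eq_norm_sq]
  ring

theorem hasDerivAt_norm_sub_sq_of_two_animal {E : Type*} [NormedAddCommGroup E]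
    [InnerProductSpace ℝ E] {ξ t : ℝ} {x₁ x₂ : ℝ → E} (hne : x₁ t ≠ x₂ t)
    (h₁ : HasDerivAt x₁ ((x₂ t - x₁ t) - (ξ^2 / ‖x₂ t - x₁ t‖^2) • (x₂ t - x₁ t)) t)
    (h₂ : HasDerivAt x₂ ((x₁ t - x₂ t) - (ξ^2 / ‖x₁ t - x₂ t‖^2) • (x₁ t - x₂ t)) t) :
    HasDerivAt (fun s => ‖x₁ s - x₂ s‖ ^ 2) (4 * (ξ ^ 2 - ‖x₁ t - x₂ t‖ ^ 2)) t := by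
  have hd : HasDerivAt (fun s => x₁ s - x₂ s)
      ((2 * (ξ ^ 2 / ‖x₁ t - x₂ t‖ ^ 2 - 1)) • (x₁ t - x₂ t)) t := by
    refine (h₁.sub h₂).congr_deriv ?_
    rw [← neg_sub (x₁ t), norm_neg]
    module
  convert hd.norm_sq_of_smul using 1
  have : ‖x₁ t - x₂ t‖ ≠ 0 := norm_ne_zero_iff.2 (sub_ne_zero.2 hne)
  field_simp
  ring

theorem eq_add_mul_exp_of_hasDerivAt_mul_sub {u : ℝ → ℝ} {k m : ℝ}
    (hu : ∀ t, 0 ≤ t → HasDerivAt u (k * (m - u t)) t) {t : ℝ} (ht : 0 ≤ t) :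
    u t = m + (u 0 - m) * exp (-(k * t)) := by
  have hconst : ∀ s, 0 ≤ s → HasDerivAt (fun s => (u s - m) * exp (k * s)) 0 s := by
    intro s hs
    have h := ((hu s hs).sub_const m).mul (hasDerivAt_const_mul k).exp
    refine h.congr_deriv ?_
    ring
  have hconst_t := constant_of_has_deriv_right_zero
    (fun s hs => (hconst s hs.1).continuousAt.continuousWithinAt)
    (fun s hs => (hconst s hs.1).hasDerivWithinAt) t ⟨ht, le_rfl⟩
  rw [mul_zero, exp_zero, mul_one] at hconst_t
  rw [← hconst_t, mul_assoc, ← exp_add, add_neg_cancel, exp_zero]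
  ring

theorem strictMono_add_mul_exp_neg_mul {k m C : ℝ} (hk : 0 < k) (hC : C < 0) :
    StrictMono fun t => m + C * exp (-(k * t)) := by
  intro s t hst
  have : exp (-(k * t)) < exp (-(k * s)) := exp_lt_exp.2 (by nlinarith)
  dsimp only
  nlinarith

theorem strictAnti_add_mul_exp_neg_mul {k m C : ℝ} (hk : 0 < k) (hC : 0 < C) :
    StrictAnti fun t => m + C * exp (-(k * t)) := by
  intro s t hst
  have : exp (-(k * t)) < exp (-(k * s)) := exp_lt_exp.2 (by nlinarith)
  dsimp only
  nlinarith

theorem StrictMonoOn.of_sq {f : ℝ → ℝ} {s : Set ℝ} (hf : ∀ t, 0 ≤ f t)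
    (h : StrictMonoOn (fun t => f t ^ 2) s) : StrictMonoOn f s :=
  fun _ ha _ hb hab => (sq_lt_sq₀ (hf _) (hf _)).1 (h ha hb hab)

theorem StrictAntiOn.of_sq {f : ℝ → ℝ} {s : Set ℝ} (hf : ∀ t, 0 ≤ f t)
    (h : StrictAntiOn (fun t => f t ^ 2) s) : StrictAntiOn f s :=
  fun _ ha _ hb hab => (sq_lt_sq₀ (hf _) (hf _)).1 (h ha hb hab)

/-- Two-animal system: the inter-animal distance is strictly increasing if initially
below ξ, strictly decreasing if initially above ξ, and constant if initially equal to ξ. -/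
theorem two_animal_distance_monotone (ξ : ℝ) (hξ : 0 < ξ)
    (x₁ x₂ : ℝ → EuclideanSpace ℝ (Fin 2))
    (hne : ∀ t : ℝ, 0 ≤ t → x₁ t ≠ x₂ t)
    (hode₁ : ∀ t : ℝ, 0 ≤ t → HasDerivAt x₁
      ((x₂ t - x₁ t) - (ξ^2 / ‖x₂ t - x₁ t‖^2) • (x₂ t - x₁ t)) t)
    (hode₂ : ∀ t : ℝ, 0 ≤ t → HasDerivAt x₂
      ((x₁ t - x₂ t) - (ξ^2 / ‖x₁ t - x₂ t‖^2) • (x₁ t - x₂ t)) t) :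
    (‖x₁ 0 - x₂ 0‖ < ξ → StrictMonoOn (fun t => ‖x₁ t - x₂ t‖) (Set.Ici 0)) ∧
    (ξ < ‖x₁ 0 - x₂ 0‖ → StrictAntiOn (fun t => ‖x₁ t - x₂ t‖) (Set.Ici 0)) ∧
    (‖x₁ 0 - x₂ 0‖ = ξ → ∀ t : ℝ, 0 ≤ t → ‖x₁ t - x₂ t‖ = ξ) := by
  have hsq : EqOn (fun t => ξ ^ 2 + (‖x₁ 0 - x₂ 0‖ ^ 2 - ξ ^ 2) * exp (-(4 * t)))
      (fun t => ‖x₁ t - x₂ t‖ ^ 2) (Ici 0) := fun t ht =>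
    (eq_add_mul_exp_of_hasDerivAt_mul_sub (fun s hs =>
      hasDerivAt_norm_sub_sq_of_two_animal (hne s hs) (hode₁ s hs) (hode₂ s hs)) ht).symm
  have hd₀ := norm_nonneg (x₁ 0 - x₂ 0)
  refine ⟨fun h => ?_, fun h => ?_, fun h t ht => ?_⟩
  · refine StrictMonoOn.of_sq (fun _ => norm_nonneg _) (StrictMonoOn.congr ?_ hsq)
    exact (strictMono_add_mul_exp_neg_mul four_pos (by nlinarith)).strictMonoOn _
  · refine StrictAntiOn.of_sq (fun _ => norm_nonneg _) (StrictAntiOn.congr ?_ hsq)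
    exact (strictAnti_add_mul_exp_neg_mul four_pos (by nlinarith)).strictAntiOn _
  · have hsq_t := hsq ht
    simp only [h, sub_self, zero_mul, add_zero] at hsq_t
    exact (sq_eq_sq₀ (norm_nonneg _) (h ▸ hd₀)).1 hsq_t.symm
end

section
/- Let x ∈ (ℝ²)^N be a configuration of N ≥ 2 distinct points, and for each i let C_i(x) = argmin_{j ≠ i} ‖x_i − x_j‖ be the set of closest neighbors of i. If every closest neighbor of every point i lies at distance exactly ξ > 0 from x_i, then for every i we have 1 ≤ |C_i(x)| ≤ 6. -/
/-!
All closest neighbors of `x i` lie on the circle of radius `ξ` about `x i`, and any two distinct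
points are at least `ξ` apart, since each is at distance `ξ` from its own closest neighbor. Cut
the circle into six half-open arcs of angle `π / 3`: by the law of cosines two points of one arc
are closer than the radius, so each arc carries at most one closest neighbor.
-/

open Real InnerProductGeometry Module

theorem norm_sub_lt_of_angle_lt_pi_div_three {V : Type*} [NormedAddCommGroup V]
    [InnerProductSpace ℝ V] {x y : V} (hx : x ≠ 0) (hxy : ‖x‖ = ‖y‖) (h : angle x y < π / 3) :
    ‖x - y‖ < ‖x‖ := by
  have hcos : 1 / 2 < cos (angle x y) := by
    rw [← cos_pi_div_three]
    exact cos_lt_cos_of_nonneg_of_le_pi (angle_nonneg x y) (by linarith [pi_pos]) h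
  have hx_sq : 0 < ‖x‖ ^ 2 := by positivity
  refine lt_of_pow_lt_pow_left₀ 2 (norm_nonneg x) ?_
  calc ‖x - y‖ ^ 2 = 2 * ‖x‖ ^ 2 * (1 - cos (angle x y)) := by
        rw [sq, norm_sub_sq_eq_norm_sq_add_norm_sq_sub_two_mul_norm_mul_norm_mul_cos_angle, ← hxy]
        ring
    _ < ‖x‖ ^ 2 := by nlinarith

namespace Complex

theorem angle_eq_abs_arg_sub {x y : ℂ} (hx : x ≠ 0) (hy : y ≠ 0) (h : |x.arg - y.arg| < π) :
    angle x y = |x.arg - y.arg| := by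
  have harg : (x / y).arg = x.arg - y.arg := by
    rw [← arg_coe_angle_toReal_eq_arg, arg_div_coe_angle hx hy, ← Real.Angle.coe_sub,
      Real.Angle.toReal_coe_eq_self_iff_mem_Ioc]
    constructor <;> linarith [abs_lt.1 h]
  rw [angle_eq_abs_arg hx hy, harg]

/-- The index `n ∈ {-2, …, 3}` of the sector `(n - 1) π / 3 < arg w ≤ n π / 3` containing `w`. -/
noncomputable def sextant (w : ℂ) : ℤ := ⌈3 * w.arg / π⌉

theorem sextant_mem_Icc (w : ℂ) : sextant w ∈ Finset.Icc (-2 : ℤ) 3 := by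
  have h₁ : -3 < 3 * w.arg / π := by
    rw [lt_div_iff₀ pi_pos]; linarith [neg_pi_lt_arg w]
  have h₂ : 3 * w.arg / π ≤ 3 := by
    rw [div_le_iff₀ pi_pos]; linarith [arg_le_pi w]
  rw [Finset.mem_Icc, sextant]
  constructor
  · exact Int.lt_ceil.2 (by exact_mod_cast h₁)
  · exact Int.ceil_le.2 (by exact_mod_cast h₂)

theorem abs_arg_sub_lt_of_sextant_eq {w z : ℂ} (h : sextant w = sextant z) :
    |w.arg - z.arg| < π / 3 := by
  have bounds (u : ℂ) : (sextant u - 1 : ℝ) * π < 3 * u.arg ∧ 3 * u.arg ≤ sextant u * π := by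
    rw [← lt_div_iff₀ pi_pos, ← div_le_iff₀ pi_pos, sextant]
    exact ⟨by linarith [Int.ceil_lt_add_one (3 * u.arg / π)], Int.le_ceil _⟩
  obtain ⟨hw₁, hw₂⟩ := bounds w
  obtain ⟨hz₁, hz₂⟩ := bounds z
  rw [h] at hw₁ hw₂
  rw [abs_lt]
  constructor <;> linarith

theorem ncard_le_six_of_subset_sphere {s : Set ℂ} {r : ℝ} (hs : s ⊆ Metric.sphere 0 r)
    (hsep : s.Pairwise fun u v => r ≤ dist u v) : s.ncard ≤ 6 := by
  have hinj : Set.InjOn sextant s := by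
    intro u hu v hv huv
    by_contra hne
    have hu_norm : ‖u‖ = r := by simpa using hs hu
    have hv_norm : ‖v‖ = r := by simpa using hs hv
    have hr : 0 < r := by
      by_contra! hr
      exact hne <| (norm_le_zero_iff.1 (hu_norm.trans_le hr)).trans
        (norm_le_zero_iff.1 (hv_norm.trans_le hr)).symm
    have hu0 : u ≠ 0 := norm_pos_iff.1 (hu_norm ▸ hr)
    have hv0 : v ≠ 0 := norm_pos_iff.1 (hv_norm ▸ hr)
    have harg := abs_arg_sub_lt_of_sextant_eq huv
    have hangle : angle u v < π / 3 :=
      (angle_eq_abs_arg_sub hu0 hv0 (by linarith [pi_pos])).trans_lt harg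
    have := norm_sub_lt_of_angle_lt_pi_div_three hu0 (hu_norm.trans hv_norm.symm) hangle
    rw [hu_norm, ← dist_eq_norm] at this
    exact (hsep hu hv hne).not_gt this
  calc s.ncard ≤ (Finset.Icc (-2 : ℤ) 3 : Set ℤ).ncard :=
        Set.ncard_le_ncard_of_injOn sextant (fun u _ => sextant_mem_Icc u) hinj
    _ = 6 := by rw [Set.ncard_coe_finset]; rfl

end Complex

theorem ncard_le_six_of_subset_sphere {E : Type*} [NormedAddCommGroup E] [InnerProductSpace ℝ E]
    (hE : finrank ℝ E = 2) {s : Set E} {c : E} {r : ℝ} (hs : s ⊆ Metric.sphere c r)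
    (hsep : s.Pairwise fun u v => r ≤ dist u v) : s.ncard ≤ 6 := by
  have : FiniteDimensional ℝ E := Module.finite_of_finrank_eq_succ hE
  let e : ℂ ≃ₗᵢ[ℝ] E :=
    Complex.isometryOfOrthonormal ((stdOrthonormalBasis ℝ E).reindex (finCongr hE))
  let f : E ≃ᵢ ℂ := (IsometryEquiv.subRight c).trans e.symm.toIsometryEquiv
  rw [← Set.ncard_image_of_injective s f.injective]
  apply Complex.ncard_le_six_of_subset_sphere
  · have hfc : f c = 0 := by simp [f]
    rw [← hfc, ← f.image_sphere]
    exact Set.image_mono hs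
  · rintro _ ⟨u, hu, rfl⟩ _ ⟨v, hv, rfl⟩ huv
    rw [f.dist_eq]
    exact hsep hu hv (ne_of_apply_ne f huv)

theorem closest_neighbor_card_bound_general (N : ℕ) (hN : 2 ≤ N) (ξ : ℝ)
    (x : Fin N → EuclideanSpace ℝ (Fin 2)) (hinj : Function.Injective x)
    (C : Fin N → Set (Fin N))
    (hC : ∀ i, C i = {j | j ≠ i ∧ ∀ k, k ≠ i → dist (x i) (x j) ≤ dist (x i) (x k)})
    (hdist : ∀ i, ∀ j ∈ C i, dist (x i) (x j) = ξ) :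
    ∀ i, 1 ≤ (C i).ncard ∧ (C i).ncard ≤ 6 := by
  have : Nontrivial (Fin N) := Fin.nontrivial_iff_two_le.2 hN
  have hne : ∀ i, (C i).Nonempty := by
    intro i
    obtain ⟨j, hj, hmin⟩ := Set.exists_min_image {i}ᶜ (fun j => dist (x i) (x j)) (Set.toFinite _)
      (Set.nonempty_compl_of_nontrivial i)
    exact ⟨j, hC i ▸ ⟨hj, fun k hk => hmin k hk⟩⟩
  have hsep : ∀ j k, j ≠ k → ξ ≤ dist (x j) (x k) := by
    intro j k hjk
    obtain ⟨m, hm⟩ := hne j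
    rw [← hdist j m hm]
    exact (hC j ▸ hm).2 k hjk.symm
  intro i
  refine ⟨(Set.ncard_pos (Set.toFinite _)).2 (hne i), ?_⟩
  rw [← Set.ncard_image_of_injective (C i) hinj]
  refine ncard_le_six_of_subset_sphere finrank_euclideanSpace_fin (c := x i) (r := ξ) ?_ ?_
  · rintro _ ⟨j, hj, rfl⟩
    rw [Metric.mem_sphere, dist_comm]
    exact hdist i j hj
  · rintro _ ⟨j, -, rfl⟩ _ ⟨k, -, rfl⟩ hjk
    exact hsep j k (ne_of_apply_ne x hjk)

/-- Proposition 2 (cardinality bound): if all closest neighbors of every point are at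
distance exactly ξ > 0, then every point has between 1 and 6 closest neighbors. -/
theorem closest_neighbor_card_bound (N : ℕ) (hN : 2 ≤ N) (ξ : ℝ) (hξ : 0 < ξ)
    (x : Fin N → EuclideanSpace ℝ (Fin 2)) (hinj : Function.Injective x)
    (C : Fin N → Set (Fin N))
    (hC : ∀ i, C i = {j | j ≠ i ∧ ∀ k, k ≠ i → dist (x i) (x j) ≤ dist (x i) (x k)})
    (hdist : ∀ i, ∀ j ∈ C i, dist (x i) (x j) = ξ) :
    ∀ i, 1 ≤ (C i).ncard ∧ (C i).ncard ≤ 6 :=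
  closest_neighbor_card_bound_general N hN ξ x hinj C hC hdist
end

section
/- Fix N ≥ 2 and let V = {v : {1,…,N} → {1,…,N} : v(i) ≠ i for all i}. For v ∈ V define E_v = {x ∈ (ℝ²)^N \ S : ∀i, ∀k ∉ {i, v(i)}, ‖x_{v(i)} − x_i‖ < ‖x_k − x_i‖}. Then the sets E_v are open and pairwise disjoint (E_v ∩ E_u = ∅ for u ≠ v), and the union of their closures (in the subspace topology of (ℝ²)^N \ S) covers (ℝ²)^N \ S. -/
/-!
A configuration in which, seen from every point, the distances to all other points are distinct
and positive has a unique strict nearest-neighbour map, hence lies in exactly one piece `E v`.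
Such configurations are dense: for `k ∉ {i, l}`, moving `x k` alone off the sphere of
radius `dist (x l) (x i)` around `x i` breaks the tie, and spheres have empty interior in a
nontrivial real normed space. A finite intersection of open dense sets is dense, so the closures
of the pieces cover everything. Openness and disjointness are immediate from the strict
inequalities.
-/

open Set Function Metric

theorem dense_biInter_finset_of_isOpen {X α : Type*} [TopologicalSpace X] {f : α → Set X}
    (s : Finset α) (ho : ∀ a ∈ s, IsOpen (f a)) (hd : ∀ a ∈ s, Dense (f a)) :
    Dense (⋂ a ∈ s, f a) := by
  classical
  induction s using Finset.induction_on with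
  | empty => simp
  | insert a s _ ih =>
    simp only [Finset.mem_insert, forall_eq_or_imp] at ho hd
    rw [Finset.set_biInter_insert]
    exact hd.1.inter_of_isOpen_left (ih ho.2 hd.2) ho.1

theorem dense_iInter_of_isOpen_of_finite {X α : Type*} [TopologicalSpace X] [Finite α]
    {f : α → Set X} (ho : ∀ a, IsOpen (f a)) (hd : ∀ a, Dense (f a)) : Dense (⋂ a, f a) := by
  cases nonempty_fintype α
  simpa using dense_biInter_finset_of_isOpen Finset.univ (fun a _ => ho a) fun a _ => hd a

theorem isOpen_setOf_injective {ι X : Type*} [Finite ι] [TopologicalSpace X] [T2Space X] :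
    IsOpen {x : ι → X | Injective x} := by
  have : {x : ι → X | Injective x} = ⋂ i, ⋂ j, ⋂ (_ : i ≠ j), {x | x i ≠ x j} := by
    ext x
    simp only [mem_ofPred_eq, mem_iInter, Injective]
    exact forall₂_congr fun i j => not_imp_not.symm
  rw [this]
  exact isOpen_iInter_of_finite fun i => isOpen_iInter_of_finite fun j =>
    isOpen_iInter_of_finite fun _ => isOpen_ne_fun (continuous_apply i) (continuous_apply j)

section NearestNeighbor

variable {ι X : Type*} [PseudoMetricSpace X]

def IsStrictNearestNeighbor (x : ι → X) (v : ι → ι) : Prop :=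
  ∀ i k, k ≠ i → k ≠ v i → dist (x (v i)) (x i) < dist (x k) (x i)

theorem isOpen_setOf_isStrictNearestNeighbor [Finite ι] (v : ι → ι) :
    IsOpen {x : ι → X | IsStrictNearestNeighbor x v} := by
  simp only [IsStrictNearestNeighbor, ofPred_forall]
  exact isOpen_iInter_of_finite fun i => isOpen_iInter_of_finite fun k =>
    isOpen_iInter_of_finite fun _ => isOpen_iInter_of_finite fun _ =>
      isOpen_lt (by fun_prop) (by fun_prop)

theorem IsStrictNearestNeighbor.eq {x : ι → X} {u v : ι → ι} (hu : ∀ i, u i ≠ i)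
    (hv : ∀ i, v i ≠ i) (hxu : IsStrictNearestNeighbor x u) (hxv : IsStrictNearestNeighbor x v) :
    u = v := by
  funext i
  by_contra h
  exact (hxu i (v i) (hv i) (Ne.symm h)).not_gt (hxv i (u i) (hu i) h)

-- Allowing `l = i` also makes every distance `dist (x k) (x i)` with `k ≠ i` positive.
def DistinctDistances (x : ι → X) : Prop :=
  ∀ i k l, k ≠ i → k ≠ l → dist (x k) (x i) ≠ dist (x l) (x i)

theorem DistinctDistances.injective {x : ι → X} (hx : DistinctDistances x) : Injective x := by
  intro k i hki
  by_contra hne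
  exact hx i k i hne hne (by simp [hki])

theorem DistinctDistances.exists_isStrictNearestNeighbor [Finite ι] [Nontrivial ι]
    {x : ι → X} (hx : DistinctDistances x) :
    ∃ v : ι → ι, (∀ i, v i ≠ i) ∧ IsStrictNearestNeighbor x v := by
  have hmin : ∀ i, ∃ j, j ≠ i ∧ ∀ k, k ≠ i → dist (x j) (x i) ≤ dist (x k) (x i) := fun i =>
    {k | k ≠ i}.exists_min_image (fun k => dist (x k) (x i)) (toFinite _) (exists_ne i)
  choose v hvi hvmin using hmin
  exact ⟨v, hvi, fun i k hki hkv =>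
    (hvmin i k hki).lt_of_ne (hx i (v i) k (hvi i) (Ne.symm hkv))⟩

end NearestNeighbor

section Density

variable {ι E : Type*} [NormedAddCommGroup E] [NormedSpace ℝ E] [Nontrivial E]

theorem dense_setOf_dist_ne [DecidableEq ι] {i k l : ι} (hki : k ≠ i) (hkl : k ≠ l) :
    Dense {x : ι → E | dist (x k) (x i) ≠ dist (x l) (x i)} := by
  intro x
  have hxk : x k ∈ closure (sphere (x i) (dist (x l) (x i)))ᶜ := by
    rw [closure_compl, interior_sphere', compl_empty]
    trivial
  have hmaps : MapsTo (update x k) (sphere (x i) (dist (x l) (x i)))ᶜ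
      {x : ι → E | dist (x k) (x i) ≠ dist (x l) (x i)} := fun y hy => by
    simpa [update_of_ne hki.symm, update_of_ne hkl.symm, dist_eq_norm] using hy
  simpa using map_mem_closure (by fun_prop : Continuous (update x k)) hxk hmaps

theorem dense_setOf_distinctDistances [Finite ι] :
    Dense {x : ι → E | DistinctDistances x} := by
  classical
  have : {x : ι → E | DistinctDistances x} =
      ⋂ p : {p : ι × ι × ι // p.2.1 ≠ p.1 ∧ p.2.1 ≠ p.2.2},
        {x | dist (x p.1.2.1) (x p.1.1) ≠ dist (x p.1.2.2) (x p.1.1)} := by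
    ext x
    simp [DistinctDistances]
  rw [this]
  exact dense_iInter_of_isOpen_of_finite
    (fun p => isOpen_ne_fun (by fun_prop) (by fun_prop)) fun p => dense_setOf_dist_ne p.2.1 p.2.2

end Density

/-- The pieces E_v (configurations where v(i) is the strict unique nearest neighbor of
every i) are open and pairwise disjoint, and the union of their closures in the
subspace topology of the non-degenerate configurations covers that set. -/
theorem pieces_open_disjoint_cover (N : ℕ) (hN : 2 ≤ N)
    (S : Set (Fin N → EuclideanSpace ℝ (Fin 2)))
    (hS : S = {x | ∃ i j : Fin N, i ≠ j ∧ x i = x j})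
    (V : Set (Fin N → Fin N)) (hV : V = {v | ∀ i, v i ≠ i})
    (E : (Fin N → Fin N) → Set (Fin N → EuclideanSpace ℝ (Fin 2)))
    (hE : ∀ v, E v = {x | x ∉ S ∧ ∀ i, ∀ k, k ≠ i → k ≠ v i →
      dist (x (v i)) (x i) < dist (x k) (x i)}) :
    (∀ v ∈ V, IsOpen (E v)) ∧
    (∀ u ∈ V, ∀ v ∈ V, u ≠ v → E u ∩ E v = ∅) ∧
    (Sᶜ ⊆ ⋃ v ∈ V, (closure (E v) ∩ Sᶜ)) := by
  have hSc : Sᶜ = {x | Injective x} := by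
    ext x
    simp [hS, Injective, not_imp_not]
  have hE' : ∀ v, E v = {x | Injective x} ∩ {x | IsStrictNearestNeighbor x v} := by
    intro v
    rw [hE, ← hSc]
    rfl
  have : Nontrivial (Fin N) := Fin.nontrivial_iff_two_le.mpr hN
  refine ⟨fun v _ => ?_, fun u hu v hv huv => ?_, fun x hx => ?_⟩
  · rw [hE']
    exact isOpen_setOf_injective.inter (isOpen_setOf_isStrictNearestNeighbor v)
  · rw [hV] at hu hv
    refine eq_empty_of_forall_notMem fun x ⟨hxu, hxv⟩ => huv ?_
    rw [hE'] at hxu hxv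
    exact IsStrictNearestNeighbor.eq hu hv hxu.2 hxv.2
  · have hcover : {x | DistinctDistances x} ⊆ ⋃ v ∈ V, E v := fun y hy => by
      obtain ⟨v, hvi, hyv⟩ := hy.exists_isStrictNearestNeighbor
      refine mem_biUnion (by rw [hV]; exact hvi) ?_
      rw [hE']
      exact ⟨hy.injective, hyv⟩
    have hx' := (dense_setOf_distinctDistances.mono hcover) x
    rw [(toFinite V).closure_biUnion] at hx'
    obtain ⟨v, hv, hxv⟩ := mem_iUnion₂.mp hx'
    exact mem_biUnion hv ⟨hxv, hx⟩
end

section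
/- Suppose x : [0, L) → (ℝ²)^N is a differentiable trajectory of the nearest-neighbor attraction–repulsion system with ξ > 0, on a time interval where indices h, k satisfy: h is the unique nearest neighbor of k, k is the unique nearest neighbor of h, and ‖x_h(t) − x_k(t)‖ ≤ ε < ξ. Then d/dt ‖x_h(t) − x_k(t)‖² ≥ 4(ξ² − ε²)·(‖x_h − x_k‖²)/ξ² > 0 whenever x_h ≠ x_k; in particular ‖x_h(t) − x_k(t)‖ is strictly increasing on that interval. -/
/-!
Writing `w = x_h - x_k`, the two equations of motion are the same odd interaction
`v ↦ v - (ξ² / ‖v‖²) • v` evaluated at `-w` and `w`, so `w' = (2ξ²/‖w‖² - 2) • w` and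
`d/dt ‖w‖² = 2⟪w, w'⟫ = 4(ξ² - ‖w‖²)`. This is positive as long as `‖w‖ ≤ ε < ξ`, and
`ξ² - ‖w‖² ≥ ξ² - ε² ≥ (ξ² - ε²)‖w‖²/ξ²` gives the quantitative bound.
-/

section InnerProductSpace

variable {E : Type*} [NormedAddCommGroup E] [InnerProductSpace ℝ E]

theorem HasDerivAt.norm_sq_of_smul_self {w : ℝ → E} {c t : ℝ}
    (hw : HasDerivAt w (c • w t) t) :
    HasDerivAt (fun s => ‖w s‖ ^ 2) (2 * c * ‖w t‖ ^ 2) t := by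
  convert hw.norm_sq using 1
  rw [real_inner_smul_right, real_inner_self_eq_norm_sq]
  ring

theorem HasDerivAt.sub_of_mutual_interaction {u v : ℝ → E} {ξ t : ℝ}
    (hu : HasDerivAt u ((v t - u t) - (ξ ^ 2 / ‖v t - u t‖ ^ 2) • (v t - u t)) t)
    (hv : HasDerivAt v ((u t - v t) - (ξ ^ 2 / ‖u t - v t‖ ^ 2) • (u t - v t)) t) :
    HasDerivAt (fun s => u s - v s) ((2 * ξ ^ 2 / ‖u t - v t‖ ^ 2 - 2) • (u t - v t)) t := by
  refine (hu.sub hv).congr_deriv ?_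
  rw [norm_sub_rev (v t), ← neg_sub (u t) (v t)]
  module

theorem hasDerivAt_norm_sq_sub_of_mutual_interaction {u v : ℝ → E} {ξ t : ℝ}
    (hne : u t ≠ v t)
    (hu : HasDerivAt u ((v t - u t) - (ξ ^ 2 / ‖v t - u t‖ ^ 2) • (v t - u t)) t)
    (hv : HasDerivAt v ((u t - v t) - (ξ ^ 2 / ‖u t - v t‖ ^ 2) • (u t - v t)) t) :
    HasDerivAt (fun s => ‖u s - v s‖ ^ 2) (4 * (ξ ^ 2 - ‖u t - v t‖ ^ 2)) t := by
  have hpos : ‖u t - v t‖ ≠ 0 := norm_ne_zero_iff.2 (sub_ne_zero.2 hne)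
  convert (hu.sub_of_mutual_interaction hv).norm_sq_of_smul_self using 1
  field_simp
  ring

end InnerProductSpace

theorem repulsion_rate_ge {r ε ξ : ℝ} (hr₀ : 0 ≤ r) (hrε : r ≤ ε) (hεξ : ε < ξ) :
    4 * (ξ ^ 2 - ε ^ 2) * r ^ 2 / ξ ^ 2 ≤ 4 * (ξ ^ 2 - r ^ 2) := by
  have hξ : 0 < ξ ^ 2 := by nlinarith
  have hrε' : r ^ 2 ≤ ε ^ 2 := pow_le_pow_left₀ hr₀ hrε 2
  have hεξ' : ε ^ 2 ≤ ξ ^ 2 := pow_le_pow_left₀ (hr₀.trans hrε) hεξ.le 2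
  rw [div_le_iff₀ hξ]
  nlinarith [mul_nonneg (sub_nonneg.2 hεξ') (sub_nonneg.2 (hrε'.trans hεξ'))]

theorem repulsion_rate_pos {r ξ : ℝ} (hr₀ : 0 ≤ r) (hrξ : r < ξ) : 0 < 4 * (ξ ^ 2 - r ^ 2) := by
  nlinarith

theorem strictMonoOn_of_hasDerivAt_pos {D : Set ℝ} (hD : Convex ℝ D) {f f' : ℝ → ℝ}
    (hf : ∀ t ∈ D, HasDerivAt f (f' t) t) (hf' : ∀ t ∈ D, 0 < f' t) : StrictMonoOn f D :=
  strictMonoOn_of_deriv_pos hD (fun t ht => (hf t ht).continuousAt.continuousWithinAt)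
    fun t ht => (hf t (interior_subset ht)).deriv ▸ hf' t (interior_subset ht)

theorem StrictMonoOn.of_sq_s11 {D : Set ℝ} {g : ℝ → ℝ} (hg : StrictMonoOn (fun t => g t ^ 2) D)
    (hg₀ : ∀ t ∈ D, 0 ≤ g t) : StrictMonoOn g D :=
  fun _ ha _ hb hab => lt_of_pow_lt_pow_left₀ 2 (hg₀ _ hb) (hg ha hb hab)

theorem mutual_neighbors_repel_general (N : ℕ) (ξ ε L : ℝ)
    (hεξ : ε < ξ)
    (x : ℝ → Fin N → EuclideanSpace ℝ (Fin 2)) (h k : Fin N)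
    (hne : ∀ t ∈ Set.Ico (0:ℝ) L, x t h ≠ x t k)
    (hclose : ∀ t ∈ Set.Ico (0:ℝ) L, ‖x t h - x t k‖ ≤ ε)
    (hodeh : ∀ t ∈ Set.Ico (0:ℝ) L, HasDerivAt (fun s => x s h)
      ((x t k - x t h) - (ξ^2 / ‖x t k - x t h‖^2) • (x t k - x t h)) t)
    (hodek : ∀ t ∈ Set.Ico (0:ℝ) L, HasDerivAt (fun s => x s k)
      ((x t h - x t k) - (ξ^2 / ‖x t h - x t k‖^2) • (x t h - x t k)) t) :
    (∀ t ∈ Set.Ico (0:ℝ) L, ∃ d : ℝ,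
      HasDerivAt (fun s => ‖x s h - x s k‖^2) d t ∧
      4 * (ξ^2 - ε^2) * ‖x t h - x t k‖^2 / ξ^2 ≤ d ∧ 0 < d) ∧
    StrictMonoOn (fun t => ‖x t h - x t k‖) (Set.Ico (0:ℝ) L) := by
  have hderiv : ∀ t ∈ Set.Ico (0:ℝ) L, HasDerivAt (fun s => ‖x s h - x s k‖ ^ 2)
      (4 * (ξ ^ 2 - ‖x t h - x t k‖ ^ 2)) t := fun t ht =>
    hasDerivAt_norm_sq_sub_of_mutual_interaction (hne t ht) (hodeh t ht) (hodek t ht)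
  have hpos : ∀ t ∈ Set.Ico (0:ℝ) L, 0 < 4 * (ξ ^ 2 - ‖x t h - x t k‖ ^ 2) := fun t ht =>
    repulsion_rate_pos (norm_nonneg _) ((hclose t ht).trans_lt hεξ)
  refine ⟨fun t ht => ⟨_, hderiv t ht, ?_, hpos t ht⟩, ?_⟩
  · exact repulsion_rate_ge (norm_nonneg _) (hclose t ht) hεξ
  · exact (strictMonoOn_of_hasDerivAt_pos (convex_Ico 0 L) hderiv hpos).of_sq_s11
      fun _ _ => norm_nonneg _

/-- Key estimate of Theorem 1: if two animals are mutually nearest neighbors and closer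
than ε < ξ on a time interval, the time derivative of their squared distance is bounded
below by 4(ξ² − ε²)‖x_h − x_k‖²/ξ² > 0, so their distance is strictly increasing. -/
theorem mutual_neighbors_repel (N : ℕ) (hN : 2 ≤ N) (ξ ε L : ℝ)
    (hξ : 0 < ξ) (hε : 0 ≤ ε) (hεξ : ε < ξ) (hL : 0 < L)
    (x : ℝ → Fin N → EuclideanSpace ℝ (Fin 2)) (h k : Fin N) (hhk : h ≠ k)
    (hne : ∀ t ∈ Set.Ico (0:ℝ) L, x t h ≠ x t k)
    (hclose : ∀ t ∈ Set.Ico (0:ℝ) L, ‖x t h - x t k‖ ≤ ε)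
    (hodeh : ∀ t ∈ Set.Ico (0:ℝ) L, HasDerivAt (fun s => x s h)
      ((x t k - x t h) - (ξ^2 / ‖x t k - x t h‖^2) • (x t k - x t h)) t)
    (hodek : ∀ t ∈ Set.Ico (0:ℝ) L, HasDerivAt (fun s => x s k)
      ((x t h - x t k) - (ξ^2 / ‖x t h - x t k‖^2) • (x t h - x t k)) t) :
    (∀ t ∈ Set.Ico (0:ℝ) L, ∃ d : ℝ,
      HasDerivAt (fun s => ‖x s h - x s k‖^2) d t ∧
      4 * (ξ^2 - ε^2) * ‖x t h - x t k‖^2 / ξ^2 ≤ d ∧ 0 < d) ∧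
    StrictMonoOn (fun t => ‖x t h - x t k‖) (Set.Ico (0:ℝ) L) :=
  mutual_neighbors_repel_general N ξ ε L hεξ x h k hne hclose hodeh hodek
end

section
/- If six points lie on a circle of radius ξ > 0 centered at p ∈ ℝ² and are pairwise at distance ≥ ξ, then they are exactly the vertices of a regular hexagon inscribed in the circle, i.e., consecutive points (in angular order) subtend angles of exactly 60° at p. -/
/-! Write the points in polar coordinates about `p` and sort their angles `a₀ ≤ ⋯ ≤ a₅`, all in
`(-π, π]`. The chord between angles `s` and `t` has squared length `2ξ²(1 - cos (s - t))`, so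
separation `≥ ξ` forces every difference `aⱼ - aᵢ` (`i < j`) into `[π/3, 5π/3]`. Five
consecutive gaps of at least `π/3` with total at most `5π/3` must all equal `π/3`. -/

open Real

theorem Fin.eq_add_mul_of_add_le_succ {α : Type*} [CommRing α] [PartialOrder α]
    [IsOrderedRing α] {n : ℕ} {b : Fin (n + 1) → α} {δ : α}
    (hstep : ∀ i : Fin n, b i.castSucc + δ ≤ b i.succ)
    (hlast : b (Fin.last n) ≤ b 0 + n * δ)
    (k : Fin (n + 1)) : b k = b 0 + (k : ℕ) * δ := by
  set c : Fin (n + 1) → α := fun i => b i - (i : ℕ) * δ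
  have hc : Monotone c := Fin.monotone_iff_le_succ.2 fun i => by
    simp only [c, Fin.val_succ, Fin.val_castSucc, Nat.cast_succ]
    linear_combination hstep i
  have hc0 : c (Fin.last n) ≤ c 0 := by
    simp only [c, Fin.val_last, Fin.val_zero, Nat.cast_zero, zero_mul, sub_zero]
    linear_combination hlast
  have : c k = c 0 := le_antisymm ((hc (Fin.le_last k)).trans hc0) (hc (Fin.zero_le k))
  simp only [c, Fin.val_zero, Nat.cast_zero, zero_mul, sub_zero] at this
  linear_combination this

theorem mem_Icc_of_cos_le_half {d : ℝ} (h0 : 0 ≤ d) (h2π : d < 2 * π)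
    (hcos : cos d ≤ 1 / 2) :
    d ∈ Set.Icc (π / 3) (5 * π / 3) := by
  have hπ := pi_pos
  constructor
  · by_contra! h
    have := cos_lt_cos_of_nonneg_of_le_pi h0 (by linarith) h
    rw [cos_pi_div_three] at this
    linarith
  · by_contra! h
    have := cos_lt_cos_of_nonneg_of_le_pi (by linarith) (by linarith)
      (by linarith : 2 * π - d < π / 3)
    rw [cos_pi_div_three, cos_two_pi_sub] at this
    linarith

theorem EuclideanSpace.exists_polar_of_dist_eq {p u : EuclideanSpace ℝ (Fin 2)} {r : ℝ}
    (hu : dist u p = r) :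
    ∃ t ∈ Set.Ioc (-π) π, u 0 = p 0 + r * cos t ∧ u 1 = p 1 + r * sin t := by
  set z : ℂ := ⟨u 0 - p 0, u 1 - p 1⟩
  have hz : ‖z‖ = r := by
    rw [← hu, EuclideanSpace.dist_eq, Complex.norm_def, Complex.normSq_apply]
    simp [z, Fin.sum_univ_two, Real.dist_eq, sq]
  refine ⟨z.arg, ⟨Complex.neg_pi_lt_arg z, Complex.arg_le_pi z⟩, ?_, ?_⟩
  · rw [← hz, Complex.norm_mul_cos_arg]; ring
  · rw [← hz, Complex.norm_mul_sin_arg]; ring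

theorem EuclideanSpace.dist_sq_fin_two (u v : EuclideanSpace ℝ (Fin 2)) :
    dist u v ^ 2 = (u 0 - v 0) ^ 2 + (u 1 - v 1) ^ 2 := by
  rw [EuclideanSpace.dist_eq, sq_sqrt (by positivity)]
  simp [Fin.sum_univ_two, Real.dist_eq, sq_abs]

theorem cos_sub_le_half_of_le_dist {p u v : EuclideanSpace ℝ (Fin 2)} {r s t : ℝ} (hr : 0 < r)
    (hu0 : u 0 = p 0 + r * cos s) (hu1 : u 1 = p 1 + r * sin s)
    (hv0 : v 0 = p 0 + r * cos t) (hv1 : v 1 = p 1 + r * sin t) (huv : r ≤ dist u v) :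
    cos (s - t) ≤ 1 / 2 := by
  have hchord : dist u v ^ 2 = 2 * r ^ 2 * (1 - cos (s - t)) := by
    rw [EuclideanSpace.dist_sq_fin_two, hu0, hu1, hv0, hv1, cos_sub]
    linear_combination r ^ 2 * (sin_sq_add_cos_sq s + sin_sq_add_cos_sq t)
  have : r ^ 2 ≤ dist u v ^ 2 := pow_le_pow_left₀ hr.le huv 2
  exact le_of_mul_le_mul_left (by linarith) (pow_pos hr 2)

theorem six_points_regular_hexagon_general (ξ : ℝ) (hξ : 0 < ξ)
    (p : EuclideanSpace ℝ (Fin 2)) (x : Fin 6 → EuclideanSpace ℝ (Fin 2))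
    (hcirc : ∀ i, dist (x i) p = ξ)
    (hsep : ∀ i j, i ≠ j → ξ ≤ dist (x i) (x j)) :
    ∃ (θ : ℝ) (σ : Equiv.Perm (Fin 6)), ∀ k : Fin 6,
      x (σ k) 0 = p 0 + ξ * Real.cos (θ + (k : ℕ) * (π / 3)) ∧
      x (σ k) 1 = p 1 + ξ * Real.sin (θ + (k : ℕ) * (π / 3)) := by
  choose a ha hx0 hx1 using fun i => EuclideanSpace.exists_polar_of_dist_eq (hcirc i)
  set σ := Tuple.sort a
  have hgap {i j : Fin 6} (hij : i < j) :
      a (σ j) - a (σ i) ∈ Set.Icc (π / 3) (5 * π / 3) := by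
    refine mem_Icc_of_cos_le_half (sub_nonneg.2 (Tuple.monotone_sort a hij.le))
      (by linarith [(ha (σ j)).2, (ha (σ i)).1])
      (cos_sub_le_half_of_le_dist hξ (hx0 _) (hx1 _) (hx0 _) (hx1 _) (hsep _ _ ?_))
    exact σ.injective.ne hij.ne'
  have hspacing : ∀ k : Fin 6, a (σ k) = a (σ 0) + (k : ℕ) * (π / 3) :=
    Fin.eq_add_mul_of_add_le_succ
      (fun i => by linarith [(hgap (Fin.castSucc_lt_succ (i := i))).1])
      (by push_cast; linarith [(hgap (show (0 : Fin 6) < 5 by decide)).2])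
  exact ⟨a (σ 0), σ, fun k => ⟨by rw [hx0, hspacing], by rw [hx1, hspacing]⟩⟩

/-- Rigidity: six points on a circle of radius ξ, pairwise at distance at least ξ, are
exactly the vertices of a regular hexagon inscribed in that circle: after a permutation,
the k-th point sits at angle θ + k·60°. -/
theorem six_points_regular_hexagon (ξ : ℝ) (hξ : 0 < ξ)
    (p : EuclideanSpace ℝ (Fin 2)) (x : Fin 6 → EuclideanSpace ℝ (Fin 2))
    (hinj : Function.Injective x)
    (hcirc : ∀ i, dist (x i) p = ξ)
    (hsep : ∀ i j, i ≠ j → ξ ≤ dist (x i) (x j)) :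
    ∃ (θ : ℝ) (σ : Equiv.Perm (Fin 6)), ∀ k : Fin 6,
      x (σ k) 0 = p 0 + ξ * Real.cos (θ + (k : ℕ) * (π / 3)) ∧
      x (σ k) 1 = p 1 + ξ * Real.sin (θ + (k : ℕ) * (π / 3)) :=
  six_points_regular_hexagon_general ξ hξ p x hcirc hsep
end
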